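/- arXiv:2106.10842 — 3 statements merged into one kernel-verified Lean document; each statement's English description precedes it below -/
import Mathlib

section
/- The Ramanujan identity (6/(iπ)) E₂' = E₂² − E₄ holds on the upper half-plane, where E₂(τ) = 1 − 24 Σ_{n≥1} σ₁(n) qⁿ and E₄(τ) = 1 + 240 Σ_{n≥1} σ₃(n) qⁿ with q = e^{2πiτ}. -/
/-!
Differentiating term by term, `(6 / (iπ)) E₂' = -288 ∑ n σ₁(n) qⁿ`, so after squaring the
`q`-series of `E₂` the identity becomes Besge's convolution formula
`12 ∑_{i + j = n} σ₁(i) σ₁(j) = 5 σ₃(n) + (1 - 6n) σ₁(n)`.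
This is proved by Liouville's elementary method: `∑ σ₁(i) σ₁(j)` is the sum of `a b` over the
positive solutions of `a x + b y = n`, and comparing the two ways of splitting these solutions
(by `x` against `y`, and by `a` against `b`) through explicit bijections turns every sum into a
divisor sum.
-/

open Complex Real

/-- `E₂(τ) = 1 - 24 Σ_{n≥1} σ₁(n) qⁿ`, `q = e^{2πiτ}`. -/
noncomputable def E₂ (τ : ℂ) : ℂ :=
  1 - 24 * ∑' n : ℕ+, (ArithmeticFunction.sigma 1 n : ℂ) * Complex.exp (2 * π * I * τ) ^ (n : ℕ)

/-- `E₄(τ) = 1 + 240 Σ_{n≥1} σ₃(n) qⁿ`, `q = e^{2πiτ}`. -/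
noncomputable def E₄ (τ : ℂ) : ℂ :=
  1 + 240 * ∑' n : ℕ+, (ArithmeticFunction.sigma 3 n : ℂ) * Complex.exp (2 * π * I * τ) ^ (n : ℕ)

open Finset
open scoped ArithmeticFunction.sigma

theorem Finset.sum_filter_lt_add_sum_filter_gt_add_sum_filter_eq {ι M β : Type*}
    [AddCommMonoid M] [LinearOrder β] (s : Finset ι) (f g : ι → β) (w : ι → M) :
    ∑ i ∈ s with f i < g i, w i + ∑ i ∈ s with g i < f i, w i + ∑ i ∈ s with f i = g i, w i
      = ∑ i ∈ s, w i := by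
  rw [← sum_filter_add_sum_filter_not s (fun i => f i < g i),
    ← sum_filter_add_sum_filter_not (s.filter fun i => ¬f i < g i) (fun i => g i < f i),
    filter_filter, filter_filter, add_assoc]
  congr 2 <;> exact sum_congr (filter_congr fun i _ => by grind) fun _ _ => rfl

theorem Finset.sum_Ico_one_eq_sum_range {M : Type*} [AddCommMonoid M] {f : ℕ → M} (hf : f 0 = 0)
    (d : ℕ) : ∑ a ∈ Ico 1 d, f a = ∑ a ∈ range d, f a := by
  rcases d.eq_zero_or_pos with rfl | hd
  · simp
  · rw [range_eq_Ico, sum_eq_sum_Ico_succ_bot hd, hf, zero_add]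

namespace Besge

def quadruples (n : ℕ) : Finset ((ℕ × ℕ) × (ℕ × ℕ)) :=
  {p ∈ (Icc 1 n ×ˢ Icc 1 n) ×ˢ (Icc 1 n ×ˢ Icc 1 n) | p.1.1 * p.1.2 + p.2.1 * p.2.2 = n}

variable {n : ℕ}

@[simp]
theorem mem_quadruples {a x b y : ℕ} :
    ((a, x), (b, y)) ∈ quadruples n ↔ 0 < a ∧ 0 < x ∧ 0 < b ∧ 0 < y ∧ a * x + b * y = n := by
  simp only [quadruples, mem_filter, mem_product, mem_Icc]
  constructor
  · rintro ⟨⟨⟨⟨ha, -⟩, hx, -⟩, ⟨hb, -⟩, hy, -⟩, h⟩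
    exact ⟨ha, hx, hb, hy, h⟩
  · rintro ⟨ha, hx, hb, hy, h⟩
    refine ⟨⟨⟨⟨ha, ?_⟩, hx, ?_⟩, ⟨hb, ?_⟩, hy, ?_⟩, h⟩ <;> nlinarith

theorem sum_quadruples_filter_swap {M : Type*} [AddCommMonoid M]
    (P : (ℕ × ℕ) × (ℕ × ℕ) → Prop) [DecidablePred P] (w : (ℕ × ℕ) × (ℕ × ℕ) → M) :
    ∑ p ∈ quadruples n with P p, w p = ∑ p ∈ quadruples n with P p.swap, w p.swap := by
  refine sum_nbij' Prod.swap Prod.swap ?_ ?_ (fun _ _ => rfl) (fun _ _ => rfl) (fun _ _ => rfl) <;>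
  · rintro ⟨⟨a, x⟩, b, y⟩
    simp only [mem_filter, mem_quadruples, Prod.swap_prod_mk]
    grind

variable {M : Type*} [AddCommMonoid M] (F : ℤ → ℤ → M)

theorem sum_quadruples_y_lt_x :
    ∑ p ∈ quadruples n with p.2.2 < p.1.2, F p.1.1 p.2.1
      = ∑ p ∈ quadruples n with p.1.1 < p.2.1, F p.1.1 (p.2.1 - p.1.1) := by
  refine sum_nbij' (fun p => ((p.1.1, p.1.2 - p.2.2), (p.1.1 + p.2.1, p.2.2)))
    (fun p => ((p.1.1, p.1.2 + p.2.2), (p.2.1 - p.1.1, p.2.2))) ?_ ?_ ?_ ?_ ?_ <;>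
  rintro ⟨⟨a, x⟩, b, y⟩ hp <;>
  simp only [mem_filter, mem_quadruples] at hp ⊢ <;>
  obtain ⟨⟨ha, hx, hb, hy, he⟩, hlt⟩ := hp
  · refine ⟨⟨ha, by omega, by omega, hy, ?_⟩, by omega⟩
    zify [hlt.le] at he ⊢
    linear_combination he
  · refine ⟨⟨ha, by omega, by omega, hy, ?_⟩, by omega⟩
    zify [hlt.le] at he ⊢
    linear_combination he
  · simp only [Prod.mk.injEq, true_and, and_true]; omega
  · simp only [Prod.mk.injEq, true_and, and_true]; omega
  · push_cast; ring_nf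

theorem sum_quadruples_x_eq_y :
    ∑ p ∈ quadruples n with p.1.2 = p.2.2, F p.1.1 p.2.1
      = ∑ q ∈ n.divisorsAntidiagonal, ∑ a ∈ Ico 1 q.1, F a (q.1 - a) := by
  rw [sum_sigma']
  refine sum_nbij' (fun p => ⟨(p.1.1 + p.2.1, p.1.2), p.1.1⟩)
    (fun q => ((q.2, q.1.2), (q.1.1 - q.2, q.1.2))) ?_ ?_ ?_ ?_ ?_
  · rintro ⟨⟨a, x⟩, b, y⟩ hp
    simp only [mem_filter, mem_quadruples] at hp
    simp only [mem_sigma, Nat.mem_divisorsAntidiagonal, mem_Ico]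
    obtain ⟨⟨ha, hx, hb, hy, he⟩, rfl⟩ := hp
    exact ⟨⟨by rw [← he]; ring, by rw [← he]; positivity⟩, ha, by omega⟩
  · rintro ⟨⟨d, m⟩, a⟩ hq
    simp only [mem_sigma, Nat.mem_divisorsAntidiagonal, mem_Ico] at hq
    simp only [mem_filter, mem_quadruples]
    obtain ⟨⟨he, hn⟩, ha, had⟩ := hq
    refine ⟨⟨ha, Nat.pos_of_ne_zero (right_ne_zero_of_mul (he ▸ hn)), by omega,
      Nat.pos_of_ne_zero (right_ne_zero_of_mul (he ▸ hn)), ?_⟩, trivial⟩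
    rw [← he, ← add_mul, Nat.add_sub_cancel' had.le]
  · rintro ⟨⟨a, x⟩, b, y⟩ hp
    simp only [mem_filter, mem_quadruples] at hp
    obtain ⟨-, rfl⟩ := hp
    simp
  · rintro ⟨⟨d, m⟩, a⟩ hq
    simp only [mem_sigma, mem_Ico] at hq
    simp only [Nat.add_sub_cancel' hq.2.2.le]
  · rintro ⟨⟨a, x⟩, b, y⟩ -
    simp

theorem sum_quadruples_a_eq_b :
    ∑ p ∈ quadruples n with p.1.1 = p.2.1, F p.1.1 p.2.1
      = ∑ q ∈ n.divisorsAntidiagonal, ∑ _x ∈ Ico 1 q.2, F q.1 q.1 := by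
  rw [sum_sigma']
  refine sum_nbij' (fun p => ⟨(p.1.1, p.1.2 + p.2.2), p.1.2⟩)
    (fun q => ((q.1.1, q.2), (q.1.1, q.1.2 - q.2))) ?_ ?_ ?_ ?_ ?_
  · rintro ⟨⟨a, x⟩, b, y⟩ hp
    simp only [mem_filter, mem_quadruples] at hp
    simp only [mem_sigma, Nat.mem_divisorsAntidiagonal, mem_Ico]
    obtain ⟨⟨ha, hx, hb, hy, he⟩, rfl⟩ := hp
    exact ⟨⟨by rw [← he]; ring, by rw [← he]; positivity⟩, hx, by omega⟩
  · rintro ⟨⟨d, m⟩, x⟩ hq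
    simp only [mem_sigma, Nat.mem_divisorsAntidiagonal, mem_Ico] at hq
    simp only [mem_filter, mem_quadruples]
    obtain ⟨⟨he, hn⟩, hx, hxm⟩ := hq
    refine ⟨⟨Nat.pos_of_ne_zero (left_ne_zero_of_mul (he ▸ hn)), hx,
      Nat.pos_of_ne_zero (left_ne_zero_of_mul (he ▸ hn)), by omega, ?_⟩, trivial⟩
    rw [← he, ← mul_add, Nat.add_sub_cancel' hxm.le]
  · rintro ⟨⟨a, x⟩, b, y⟩ hp
    simp only [mem_filter, mem_quadruples] at hp
    obtain ⟨-, rfl⟩ := hp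
    simp
  · rintro ⟨⟨d, m⟩, x⟩ hq
    simp only [mem_sigma, mem_Ico] at hq
    simp only [Nat.add_sub_cancel' hq.2.2.le]
  · rintro ⟨⟨a, x⟩, b, y⟩ hp
    simp only [mem_filter, mem_quadruples] at hp
    obtain ⟨-, rfl⟩ := hp
    rfl

theorem sum_quadruples_split_xy :
    ∑ p ∈ quadruples n, F p.1.1 p.2.1
      = ∑ p ∈ quadruples n with p.1.1 < p.2.1,
          (F p.1.1 (p.2.1 - p.1.1) + F (p.2.1 - p.1.1) p.1.1)
        + ∑ q ∈ n.divisorsAntidiagonal, ∑ a ∈ Ico 1 q.1, F a (q.1 - a) := by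
  rw [← sum_filter_lt_add_sum_filter_gt_add_sum_filter_eq _ (fun p => p.1.2) (fun p => p.2.2),
    sum_quadruples_filter_swap (fun p => p.1.2 < p.2.2)]
  simp only [Prod.fst_swap, Prod.snd_swap]
  rw [sum_quadruples_y_lt_x, sum_quadruples_y_lt_x (fun a b => F b a), sum_quadruples_x_eq_y,
    sum_add_distrib, add_comm (∑ p ∈ _ with _, F _ _)]

theorem sum_quadruples_split_ab :
    ∑ p ∈ quadruples n, F p.1.1 p.2.1
      = ∑ p ∈ quadruples n with p.1.1 < p.2.1, (F p.1.1 p.2.1 + F p.2.1 p.1.1)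
        + ∑ q ∈ n.divisorsAntidiagonal, ∑ _x ∈ Ico 1 q.2, F q.1 q.1 := by
  rw [← sum_filter_lt_add_sum_filter_gt_add_sum_filter_eq _ (fun p => p.1.1) (fun p => p.2.1),
    sum_quadruples_filter_swap (fun p => p.2.1 < p.1.1)]
  simp only [Prod.fst_swap, Prod.snd_swap]
  rw [sum_quadruples_a_eq_b, sum_add_distrib]

theorem sum_quadruples_liouville {G : Type*} [AddCommGroup G] (F : ℤ → ℤ → G) :
    ∑ p ∈ quadruples n with p.1.1 < p.2.1, (F p.1.1 (p.2.1 - p.1.1) + F (p.2.1 - p.1.1) p.1.1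
        - F p.1.1 p.2.1 - F p.2.1 p.1.1)
      = ∑ q ∈ n.divisorsAntidiagonal,
          (∑ _x ∈ Ico 1 q.2, F q.1 q.1 - ∑ a ∈ Ico 1 q.1, F a (q.1 - a)) := by
  have h := (sum_quadruples_split_xy F).symm.trans (sum_quadruples_split_ab (n := n) F)
  simp only [sub_sub, sum_sub_distrib]
  rw [sub_eq_sub_iff_add_eq_add, h, add_comm]

theorem six_mul_sum_range_mul_add (k d : ℕ) :
    6 * ∑ a ∈ range k, (a : ℤ) * (a + d) = (k - 1) * k * (2 * k - 1) + 3 * d * k * (k - 1) := by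
  induction k with
  | zero => simp
  | succ k ih =>
    rw [sum_range_succ]
    push_cast
    linear_combination ih

theorem six_mul_sum_Ico_mul_two_mul_add_sub (d : ℕ) :
    6 * ∑ a ∈ Ico 1 d, (a : ℤ) * (2 * a + (d - a)) = 5 * d ^ 3 - 6 * d ^ 2 + d := by
  rw [sum_Ico_one_eq_sum_range (by simp),
    sum_congr rfl fun (a : ℕ) _ => show (a : ℤ) * (2 * a + (d - a)) = a * (a + d) by ring]
  linear_combination six_mul_sum_range_mul_add d d

theorem sum_divisorsAntidiagonal_fst_pow (k n : ℕ) :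
    ∑ q ∈ n.divisorsAntidiagonal, (q.1 : ℤ) ^ k = σ k n := by
  rw [Nat.sum_divisorsAntidiagonal (fun d _ => (d : ℤ) ^ k), ArithmeticFunction.sigma_apply]
  push_cast
  rfl

theorem sum_Ico_snd_fst_mul {q : ℕ × ℕ} (hq : q ∈ n.divisorsAntidiagonal) (c : ℤ) :
    ∑ _x ∈ Ico 1 q.2, (q.1 : ℤ) * c = (n - q.1) * c := by
  obtain ⟨he, hn⟩ := Nat.mem_divisorsAntidiagonal.mp hq
  have hq2 : 1 ≤ q.2 := Nat.pos_of_ne_zero (right_ne_zero_of_mul (he ▸ hn))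
  rw [sum_const, Nat.card_Ico, nsmul_eq_mul, Nat.cast_sub hq2, ← he]
  push_cast
  ring

theorem filter_quadruples_eq_product {i j : ℕ} (hij : i + j = n) :
    {p ∈ quadruples n | (p.1.1 * p.1.2, p.2.1 * p.2.2) = (i, j)}
      = i.divisorsAntidiagonal ×ˢ j.divisorsAntidiagonal := by
  ext ⟨⟨a, x⟩, b, y⟩
  simp only [mem_filter, mem_quadruples, mem_product, Nat.mem_divisorsAntidiagonal, Prod.mk.injEq,
    ← Nat.pos_iff_ne_zero]
  constructor
  · rintro ⟨⟨ha, hx, hb, hy, -⟩, rfl, rfl⟩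
    exact ⟨⟨rfl, by positivity⟩, rfl, by positivity⟩
  · rintro ⟨⟨rfl, hi⟩, rfl, hj⟩
    exact ⟨⟨Nat.pos_of_mul_pos_right hi, Nat.pos_of_mul_pos_left hi,
      Nat.pos_of_mul_pos_right hj, Nat.pos_of_mul_pos_left hj, hij⟩, rfl, rfl⟩

theorem sum_quadruples_eq_sum_antidiagonal_sigma (n : ℕ) :
    ∑ p ∈ quadruples n, (p.1.1 : ℤ) * p.2.1
      = ∑ ij ∈ antidiagonal n, (σ 1 ij.1 * σ 1 ij.2 : ℤ) := by
  have hmaps : ∀ p ∈ quadruples n, (p.1.1 * p.1.2, p.2.1 * p.2.2) ∈ antidiagonal n := by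
    rintro ⟨⟨a, x⟩, b, y⟩ hp
    exact mem_antidiagonal.mpr (mem_quadruples.mp hp).2.2.2.2
  rw [← sum_fiberwise_of_maps_to hmaps]
  refine sum_congr rfl fun ij hij => ?_
  rw [filter_quadruples_eq_product (mem_antidiagonal.mp hij), sum_product,
    ← sum_divisorsAntidiagonal_fst_pow, ← sum_divisorsAntidiagonal_fst_pow, sum_mul_sum]
  simp

theorem twelve_mul_sum_antidiagonal_sigma_one_mul (n : ℕ) :
    12 * ∑ ij ∈ antidiagonal n, (σ 1 ij.1 * σ 1 ij.2 : ℤ) = 5 * σ 3 n + (1 - 6 * n) * σ 1 n := by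
  rw [← sum_quadruples_eq_sum_antidiagonal_sigma]
  set P := ∑ p ∈ quadruples n with p.1.1 < p.2.1, (p.1.1 : ℤ) * p.2.1
  -- `F a b = a (2a + b)` makes the summand on the left of Liouville's identity `-4 a b`.
  have hL := sum_quadruples_liouville (n := n) fun a b : ℤ => a * (2 * a + b)
  have hS := sum_quadruples_split_ab (n := n) fun a b : ℤ => a * b
  have hPL : ∑ p ∈ quadruples n with p.1.1 < p.2.1, ((p.1.1 : ℤ) * (2 * p.1.1 + (p.2.1 - p.1.1))
      + (p.2.1 - p.1.1) * (2 * (p.2.1 - p.1.1) + p.1.1) - p.1.1 * (2 * p.1.1 + p.2.1)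
      - p.2.1 * (2 * p.2.1 + p.1.1)) = -4 * P := by
    rw [mul_sum]; exact sum_congr rfl fun _ _ => by ring
  have hPS : ∑ p ∈ quadruples n with p.1.1 < p.2.1, ((p.1.1 : ℤ) * p.2.1 + p.2.1 * p.1.1)
      = 2 * P := by
    rw [mul_sum]; exact sum_congr rfl fun _ _ => by ring
  have hdiagS : ∀ q ∈ n.divisorsAntidiagonal, ∑ _x ∈ Ico 1 q.2, (q.1 : ℤ) * q.1
      = n * q.1 - q.1 ^ 2 := fun q hq => by
    rw [sum_Ico_snd_fst_mul hq]; ring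
  have hdiagL : ∀ q ∈ n.divisorsAntidiagonal, 6 * (∑ _x ∈ Ico 1 q.2, (q.1 : ℤ) * (2 * q.1 + q.1)
      - ∑ a ∈ Ico 1 q.1, (a : ℤ) * (2 * a + (q.1 - a)))
      = 18 * n * q.1 - 12 * q.1 ^ 2 - 5 * q.1 ^ 3 - q.1 := fun q hq => by
    rw [mul_sub, six_mul_sum_Ico_mul_two_mul_add_sub, sum_Ico_snd_fst_mul hq]; ring
  rw [hPL] at hL
  replace hL := congrArg (6 * ·) hL
  simp only [mul_sum, sum_congr rfl hdiagL] at hL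
  rw [hPS, sum_congr rfl hdiagS] at hS
  simp only [sum_sub_distrib, ← mul_sum] at hL hS
  simp only [← sum_divisorsAntidiagonal_fst_pow, pow_one]
  linear_combination 12 * hS - hL

end Besge

noncomputable def qSeries (a : ℕ → ℂ) (τ : ℂ) : ℂ := ∑' n, a n * cexp (2 * π * I * τ) ^ n

theorem E₂_eq_qSeries : E₂ = fun τ => 1 - 24 * qSeries (fun n => σ 1 n) τ := by
  funext τ
  rw [E₂, qSeries, tsum_pnat_eq_tsum_of_eq_zero
    (f := fun n => (σ 1 n : ℂ) * cexp (2 * π * I * τ) ^ n) (by simp)]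

theorem E₄_eq_qSeries : E₄ = fun τ => 1 + 240 * qSeries (fun n => σ 3 n) τ := by
  funext τ
  rw [E₄, qSeries, tsum_pnat_eq_tsum_of_eq_zero
    (f := fun n => (σ 3 n : ℂ) * cexp (2 * π * I * τ) ^ n) (by simp)]

theorem norm_sigma_le (k n : ℕ) : ‖(σ k n : ℂ)‖ ≤ (n : ℝ) ^ (k + 1) := by
  rw [Complex.norm_natCast]
  exact_mod_cast ArithmeticFunction.sigma_le_pow_succ k n

theorem norm_cexp_two_pi_I_mul (z : ℂ) : ‖cexp (2 * π * I * z)‖ = Real.exp (-(2 * π * z.im)) := by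
  rw [Complex.norm_exp]
  congr 1
  simp

section

variable {a b : ℕ → ℂ} {k l : ℕ} {τ : ℂ}

theorem summable_norm_mul_pow (ha : ∀ n, ‖a n‖ ≤ (n : ℝ) ^ k) {q : ℂ} (hq : ‖q‖ < 1) :
    Summable fun n => ‖a n * q ^ n‖ := by
  refine (summable_norm_pow_mul_geometric_of_norm_lt_one k hq).of_nonneg_of_le
    (fun _ => norm_nonneg _) fun n => ?_
  rw [norm_mul, norm_mul, norm_pow, norm_pow, Complex.norm_natCast]
  gcongr
  exact ha n

theorem norm_natCast_mul_le (ha : ∀ n, ‖a n‖ ≤ (n : ℝ) ^ k) (n : ℕ) :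
    ‖(n : ℂ) * a n‖ ≤ (n : ℝ) ^ (k + 1) := by
  rw [norm_mul, Complex.norm_natCast, pow_succ']
  gcongr
  exact ha n

theorem hasSum_qSeries (ha : ∀ n, ‖a n‖ ≤ (n : ℝ) ^ k) (hτ : 0 < τ.im) :
    HasSum (fun n => a n * cexp (2 * π * I * τ) ^ n) (qSeries a τ) :=
  (summable_norm_mul_pow ha (UpperHalfPlane.norm_exp_two_pi_I_lt_one ⟨τ, hτ⟩)).of_norm.hasSum

theorem hasSum_qSeries_mul (ha : ∀ n, ‖a n‖ ≤ (n : ℝ) ^ k) (hb : ∀ n, ‖b n‖ ≤ (n : ℝ) ^ l)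
    (hτ : 0 < τ.im) :
    HasSum (fun n => (∑ ij ∈ antidiagonal n, a ij.1 * b ij.2) * cexp (2 * π * I * τ) ^ n)
      (qSeries a τ * qSeries b τ) := by
  have hq := UpperHalfPlane.norm_exp_two_pi_I_lt_one ⟨τ, hτ⟩
  have hsa := summable_norm_mul_pow ha hq
  have hsb := summable_norm_mul_pow hb hq
  have hterm : ∀ n, ∑ ij ∈ antidiagonal n, a ij.1 * cexp (2 * π * I * τ) ^ ij.1
      * (b ij.2 * cexp (2 * π * I * τ) ^ ij.2)
      = (∑ ij ∈ antidiagonal n, a ij.1 * b ij.2) * cexp (2 * π * I * τ) ^ n := fun n => by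
    rw [sum_mul]
    refine sum_congr rfl fun ij hij => ?_
    rw [← mem_antidiagonal.mp hij, pow_add]
    ring
  have h := (summable_norm_sum_mul_antidiagonal_of_summable_norm hsa hsb).of_norm.hasSum
  rw [qSeries, qSeries, tsum_mul_tsum_eq_tsum_sum_antidiagonal_of_summable_norm hsa hsb]
  simpa only [hterm] using h

theorem hasDerivAt_cexp_two_pi_I_mul_pow (n : ℕ) (z : ℂ) :
    HasDerivAt (fun z => cexp (2 * π * I * z) ^ n)
      (2 * π * I * n * cexp (2 * π * I * z) ^ n) z := by
  have hpow : (fun z => cexp (2 * π * I * z) ^ n) = fun z => cexp (n * (2 * π * I) * z) := by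
    funext w
    rw [← Complex.exp_nat_mul, mul_assoc (n : ℂ)]
  rw [hpow]
  refine (((hasDerivAt_id z).const_mul ((n : ℂ) * (2 * π * I))).cexp).congr_deriv ?_
  rw [id, mul_assoc, Complex.exp_nat_mul]
  ring

theorem hasDerivAt_qSeries (ha : ∀ n, ‖a n‖ ≤ (n : ℝ) ^ k) (hτ : 0 < τ.im) :
    HasDerivAt (qSeries a) (2 * π * I * qSeries (fun n => n * a n) τ) τ := by
  set t := {z : ℂ | τ.im / 2 < z.im}
  have hτt : τ ∈ t := by simp only [t, Set.mem_ofPred_eq]; linarith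
  set r := Real.exp (-(π * τ.im))
  have hr : ‖r‖ < 1 := by
    rw [Real.norm_of_nonneg (Real.exp_nonneg _), Real.exp_lt_one_iff]
    nlinarith [Real.pi_pos]
  have hnq : ∀ z : ℂ, τ.im / 2 < z.im → ‖cexp (2 * π * I * z)‖ ≤ r := fun z hz => by
    rw [norm_cexp_two_pi_I_mul, Real.exp_le_exp]
    nlinarith [Real.pi_pos]
  have hderiv : ∀ n z, HasDerivAt (fun z => a n * cexp (2 * π * I * z) ^ n)
      (2 * π * I * (n * a n * cexp (2 * π * I * z) ^ n)) z := fun n z =>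
    ((hasDerivAt_cexp_two_pi_I_mul_pow n z).const_mul (a n)).congr_deriv (by ring)
  have hbound : ∀ n, ∀ z ∈ t,
      ‖2 * π * I * (n * a n * cexp (2 * π * I * z) ^ n)‖ ≤ 2 * π * ‖(n : ℝ) ^ (k + 1) * r ^ n‖ :=
    fun n z hz => by
    have hπ : ‖2 * π * I‖ = 2 * π := by simp [Real.pi_pos.le]
    rw [norm_mul, hπ, norm_mul, norm_pow, Real.norm_of_nonneg (by positivity)]
    gcongr
    · exact norm_natCast_mul_le ha n
    · exact hnq z hz
  have h := hasDerivAt_tsum_of_isPreconnected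
    ((summable_norm_pow_mul_geometric_of_norm_lt_one (k + 1) hr).mul_left (2 * π))
    (isOpen_lt continuous_const Complex.continuous_im)
    (convex_halfSpace_im_gt _).isPreconnected (fun n z _ => hderiv n z) hbound
    hτt (hasSum_qSeries ha hτ).summable hτt
  rwa [tsum_mul_left] at h

end

theorem twelve_mul_qSeries_sigma_one_sq {τ : ℂ} (hτ : 0 < τ.im) :
    12 * qSeries (fun n => σ 1 n) τ ^ 2
      = 5 * qSeries (fun n => σ 3 n) τ + qSeries (fun n => σ 1 n) τ
        - 6 * qSeries (fun n => n * σ 1 n) τ := by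
  have hA := hasSum_qSeries (norm_sigma_le 1) hτ
  have hB := hasSum_qSeries (norm_sigma_le 3) hτ
  have hD := hasSum_qSeries (norm_natCast_mul_le (norm_sigma_le 1)) hτ
  have hC := hasSum_qSeries_mul (norm_sigma_le 1) (norm_sigma_le 1) hτ
  rw [sq]
  refine (hC.mul_left 12).unique (((hB.mul_left 5).add hA).sub (hD.mul_left 6) |>.congr_fun ?_)
  intro n
  have h : (12 * ∑ ij ∈ antidiagonal n, (σ 1 ij.1 * σ 1 ij.2 : ℂ))
      = 5 * σ 3 n + (1 - 6 * n) * σ 1 n := by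
    exact_mod_cast Besge.twelve_mul_sum_antidiagonal_sigma_one_mul n
  linear_combination cexp (2 * π * I * τ) ^ n * h

/-- The Ramanujan identity `(6/(iπ)) E₂' = E₂² - E₄` on the upper half-plane. -/
theorem ramanujan_E₂' :
    ∀ τ : ℂ, 0 < τ.im → 6 / (I * π) * deriv E₂ τ = E₂ τ ^ 2 - E₄ τ := by
  intro τ hτ
  have hderiv : deriv E₂ τ = -(24 * (2 * π * I * qSeries (fun n => n * σ 1 n) τ)) := by
    rw [E₂_eq_qSeries]
    exact (((hasDerivAt_qSeries (norm_sigma_le 1) hτ).const_mul 24).const_sub 1).deriv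
  have hπ : (π : ℂ) ≠ 0 := ofReal_ne_zero.mpr pi_ne_zero
  rw [hderiv, E₂_eq_qSeries, E₄_eq_qSeries]
  field_simp
  linear_combination -48 * twelve_mul_qSeries_sigma_one_sq hτ
end

section
/- Let r be a rational number and suppose two linearly independent solutions y₁, y₂ of y'' + π² r² E₄ y = 0 on the upper half-plane are both modular forms of weights k₁ and k₂ respectively for a common finite-index subgroup Γ ⊆ SL(2,ℤ). If h = y₂/y₁ is a non-constant ρ-equivariant function for a 2-dimensional representation ρ of SL(2,ℤ), then h is a modular function (weight 0) for Γ, and in particular k₁ = k₂. -/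
open Complex Real MatrixGroups Matrix

/-- The Möbius action of `γ ∈ SL(2,ℤ)` on a point of the complex upper
half-plane, written on `ℂ`. -/
noncomputable def slAct (γ : Matrix.SpecialLinearGroup (Fin 2) ℤ) (τ : ℂ) : ℂ :=
  (((γ : Matrix (Fin 2) (Fin 2) ℤ) 0 0 : ℂ) * τ + ((γ : Matrix (Fin 2) (Fin 2) ℤ) 0 1 : ℂ)) /
    (((γ : Matrix (Fin 2) (Fin 2) ℤ) 1 0 : ℂ) * τ + ((γ : Matrix (Fin 2) (Fin 2) ℤ) 1 1 : ℂ))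

/-- The automorphy factor `cτ + d` of `γ` at `τ`. -/
noncomputable def jFac (γ : Matrix.SpecialLinearGroup (Fin 2) ℤ) (τ : ℂ) : ℂ :=
  ((γ : Matrix (Fin 2) (Fin 2) ℤ) 1 0 : ℂ) * τ + ((γ : Matrix (Fin 2) (Fin 2) ℤ) 1 1 : ℂ)

/-- The Möbius action of a `2 × 2` complex matrix on a complex number. -/
noncomputable def moebius (M : Matrix (Fin 2) (Fin 2) ℂ) (z : ℂ) : ℂ :=
  (M 0 0 * z + M 0 1) / (M 1 0 * z + M 1 1)

/-!
The quotient `h = y₂/y₁` transforms under `Γ` with weight `m = k₂ - k₁`. A finite-index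
subgroup contains a translation `τ ↦ τ + n` and an element `γ` with nonzero lower-left
entry `c` (powers of `T` and of `S T S⁻¹`). The first makes `h` periodic, so `h` takes the
same value at `τ₀ - n`, `τ₀`, `τ₀ + n`, where `h τ₀ ≠ 0` since `h` is non-constant. By
`ρ`-equivariance `h ∘ γ` is a function of `h`, so `(cτ + d)^m` also agrees at these three
points. If `m ≠ 0`, the three collinear points `cτ + d` would lie on one circle centred
at `0`, which is impossible.
-/

open ModularGroup

theorem norm_eq_norm_of_zpow_eq {K : Type*} [NormedDivisionRing K] {u v : K} {m : ℤ}
    (hm : m ≠ 0) (h : u ^ m = v ^ m) : ‖u‖ = ‖v‖ :=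
  (zpow_left_inj₀ (norm_nonneg u) (norm_nonneg v) hm).1 (by rw [← norm_zpow, ← norm_zpow, h])

theorem eq_zero_of_norm_add_eq_of_norm_sub_eq {E : Type*} [NormedAddCommGroup E]
    [InnerProductSpace ℝ E] {x y : E} (h₁ : ‖x + y‖ = ‖x‖) (h₂ : ‖x - y‖ = ‖x‖) : y = 0 := by
  have hpar := parallelogram_law_with_norm ℝ x y
  rw [h₁, h₂] at hpar
  have hy : ‖y‖ ^ 2 = 0 := by linarith
  simpa using hy

theorem jFac_im (γ : SL(2, ℤ)) (τ : ℂ) : (jFac γ τ).im = (γ 1 0 : ℝ) * τ.im := by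
  simp [jFac]

theorem jFac_add (γ : SL(2, ℤ)) (τ w : ℂ) : jFac γ (τ + w) = jFac γ τ + γ 1 0 * w := by
  simp only [jFac]
  ring

theorem jFac_ne_zero (γ : SL(2, ℤ)) {τ : ℂ} (hτ : τ.im ≠ 0) : jFac γ τ ≠ 0 := by
  intro h0
  have hc : γ 1 0 = 0 := by
    simpa [jFac_im, hτ] using congrArg im h0
  have hd : γ 1 1 = 0 := by
    simpa [jFac, hc] using h0
  have hdet := γ.det_coe
  rw [det_fin_two, hc, hd] at hdet
  simp at hdet

theorem slAct_im (γ : SL(2, ℤ)) (τ : ℂ) :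
    (slAct γ τ).im = τ.im / normSq (jFac γ τ) := by
  have hdet : (γ 0 0 * γ 1 1 - γ 0 1 * γ 1 0 : ℝ) = 1 := by
    exact_mod_cast det_fin_two (γ : Matrix (Fin 2) (Fin 2) ℤ) ▸ γ.det_coe
  rw [slAct, ← jFac, div_im, div_sub_div_same]
  congr 1
  simp only [jFac, add_im, add_re, mul_im, mul_re, intCast_re, intCast_im]
  linear_combination τ.im * hdet

theorem slAct_im_pos (γ : SL(2, ℤ)) {τ : ℂ} (hτ : 0 < τ.im) : 0 < (slAct γ τ).im := by
  rw [slAct_im]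
  exact div_pos hτ (normSq_pos.mpr (jFac_ne_zero γ hτ.ne'))

theorem slAct_T_zpow (n : ℤ) (τ : ℂ) : slAct (T ^ n) τ = τ + n := by
  simp [slAct, coe_T_zpow]

theorem jFac_T_zpow (n : ℤ) (τ : ℂ) : jFac (T ^ n) τ = 1 := by
  simp [jFac, coe_T_zpow]

theorem S_mul_T_zpow_mul_S_inv_one_zero (n : ℤ) : (S * T ^ n * S⁻¹) 1 0 = -n := by
  simp [coe_T_zpow, S_inv]

theorem weight_eq_zero_of_periodic {h F : ℂ → ℂ} {m : ℤ} {γ : SL(2, ℤ)} (hγ : γ 1 0 ≠ 0)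
    {t : ℝ} (ht : t ≠ 0) (hper : ∀ τ : ℂ, 0 < τ.im → h (τ + t) = h τ)
    (hwt : ∀ τ : ℂ, 0 < τ.im → h (slAct γ τ) = jFac γ τ ^ m * h τ)
    (hF : ∀ τ : ℂ, 0 < τ.im → h (slAct γ τ) = F (h τ))
    {τ₀ : ℂ} (hτ₀ : 0 < τ₀.im) (hτ₀' : h τ₀ ≠ 0) : m = 0 := by
  by_contra hm
  have hnorm : ∀ τ : ℂ, 0 < τ.im → h τ = h τ₀ → ‖jFac γ τ‖ = ‖jFac γ τ₀‖ := by
    intro τ hτ hτeq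
    refine norm_eq_norm_of_zpow_eq hm (mul_right_cancel₀ hτ₀' ?_)
    rw [← hτeq, ← hwt τ hτ, hF τ hτ, hτeq, ← hF τ₀ hτ₀, hwt τ₀ hτ₀]
  have hplus := hnorm (τ₀ + t) (by simpa using hτ₀) (hper τ₀ hτ₀)
  have hminus := hnorm (τ₀ - t) (by simpa using hτ₀)
    (by simpa using (hper (τ₀ - t) (by simpa using hτ₀)).symm)
  rw [jFac_add] at hplus
  rw [sub_eq_add_neg, jFac_add, mul_neg, ← sub_eq_add_neg] at hminus
  have hct : (γ 1 0 : ℂ) * t = 0 := eq_zero_of_norm_add_eq_of_norm_sub_eq hplus hminus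
  exact mul_ne_zero (Int.cast_ne_zero.mpr hγ) (ofReal_ne_zero.mpr ht) hct

theorem modular_solutions_same_weight_general
    (y₁ y₂ : ℂ → ℂ) (U : Set ℂ) (hU : U = {τ : ℂ | 0 < τ.im})
    (Γ : Subgroup SL(2, ℤ)) (hΓ : Γ.FiniteIndex) (k₁ k₂ : ℤ)
    (hmod₁ : ∀ γ ∈ Γ, ∀ τ ∈ U, y₁ (slAct γ τ) = jFac γ τ ^ k₁ * y₁ τ)
    (hmod₂ : ∀ γ ∈ Γ, ∀ τ ∈ U, y₂ (slAct γ τ) = jFac γ τ ^ k₂ * y₂ τ)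
    (h : ℂ → ℂ) (hh : ∀ τ ∈ U, h τ = y₂ τ / y₁ τ)
    (hnc : ∃ τ₁ ∈ U, ∃ τ₂ ∈ U, h τ₁ ≠ h τ₂)
    (ρ : SL(2, ℤ) →* GL (Fin 2) ℂ)
    (hequiv : ∀ γ : SL(2, ℤ), ∀ τ ∈ U, h (slAct γ τ) = moebius (ρ γ) (h τ)) :
    (∀ γ ∈ Γ, ∀ τ ∈ U, h (slAct γ τ) = h τ) ∧ k₁ = k₂ := by
  subst hU
  have hwt : ∀ γ ∈ Γ, ∀ τ : ℂ, 0 < τ.im → h (slAct γ τ) = jFac γ τ ^ (k₂ - k₁) * h τ := by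
    intro γ hγ τ hτ
    rw [hh _ (slAct_im_pos γ hτ), hh τ hτ, hmod₁ γ hγ τ hτ, hmod₂ γ hγ τ hτ, mul_div_mul_comm,
      ← zpow_sub₀ (jFac_ne_zero γ hτ.ne')]
  obtain ⟨n, hn, -, hTn⟩ := Γ.exists_pow_mem_of_index_ne_zero hΓ.index_ne_zero T
  obtain ⟨c, hc, -, hSTS⟩ := Γ.exists_pow_mem_of_index_ne_zero hΓ.index_ne_zero (S * T * S⁻¹)
  rw [← zpow_natCast] at hTn
  rw [conj_pow, ← zpow_natCast] at hSTS
  have hper (τ : ℂ) (hτ : 0 < τ.im) : h (τ + (n : ℝ)) = h τ := by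
    have := hwt _ hTn τ hτ
    rwa [slAct_T_zpow, jFac_T_zpow, _root_.one_zpow, one_mul] at this
  obtain ⟨τ₁, hτ₁, τ₂, hτ₂, hne⟩ := hnc
  obtain ⟨τ₀, hτ₀, hτ₀'⟩ : ∃ τ₀ : ℂ, 0 < τ₀.im ∧ h τ₀ ≠ 0 := by
    by_cases h₁ : h τ₁ = 0
    · exact ⟨τ₂, hτ₂, fun h₂ => hne (h₁.trans h₂.symm)⟩
    · exact ⟨τ₁, hτ₁, h₁⟩
  have hm : k₂ - k₁ = 0 :=
    weight_eq_zero_of_periodic (by rw [S_mul_T_zpow_mul_S_inv_one_zero]; omega)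
      (by exact_mod_cast hn.ne') hper (hwt _ hSTS) (hequiv _) hτ₀ hτ₀'
  exact ⟨fun γ hγ τ hτ => by simpa [hm] using hwt γ hγ τ hτ, by omega⟩

/-- If two linearly independent solutions `y₁, y₂` of `y'' + π²r²E₄y = 0` are
modular of weights `k₁, k₂` for a finite-index subgroup `Γ`, and `h = y₂/y₁` is a
non-constant `ρ`-equivariant function, then `h` is a modular function (weight 0)
for `Γ`; in particular `k₁ = k₂`. -/
theorem modular_solutions_same_weight
    (r : ℚ) (E₄ y₁ y₂ : ℂ → ℂ) (U : Set ℂ) (hU : U = {τ : ℂ | 0 < τ.im})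
    (hode₁ : ∀ τ ∈ U, deriv (deriv y₁) τ + π ^ 2 * (r : ℂ) ^ 2 * E₄ τ * y₁ τ = 0)
    (hode₂ : ∀ τ ∈ U, deriv (deriv y₂) τ + π ^ 2 * (r : ℂ) ^ 2 * E₄ τ * y₂ τ = 0)
    (hindep : ∀ a b : ℂ, (∀ τ ∈ U, a * y₁ τ + b * y₂ τ = 0) → a = 0 ∧ b = 0)
    (Γ : Subgroup SL(2, ℤ)) (hΓ : Γ.FiniteIndex) (k₁ k₂ : ℤ)
    (hmod₁ : ∀ γ ∈ Γ, ∀ τ ∈ U, y₁ (slAct γ τ) = jFac γ τ ^ k₁ * y₁ τ)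
    (hmod₂ : ∀ γ ∈ Γ, ∀ τ ∈ U, y₂ (slAct γ τ) = jFac γ τ ^ k₂ * y₂ τ)
    (h : ℂ → ℂ) (hh : ∀ τ ∈ U, h τ = y₂ τ / y₁ τ)
    (hnc : ∃ τ₁ ∈ U, ∃ τ₂ ∈ U, h τ₁ ≠ h τ₂)
    (ρ : SL(2, ℤ) →* GL (Fin 2) ℂ)
    (hequiv : ∀ γ : SL(2, ℤ), ∀ τ ∈ U, h (slAct γ τ) = moebius (ρ γ) (h τ)) :
    (∀ γ ∈ Γ, ∀ τ ∈ U, h (slAct γ τ) = h τ) ∧ k₁ = k₂ :=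
  modular_solutions_same_weight_general y₁ y₂ U hU Γ hΓ k₁ k₂ hmod₁ hmod₂ h hh hnc ρ hequiv
end

section
/- The group SL(2,ℤ) has a unique subgroup of index 2, namely the subgroup SL(2,ℤ)² generated by the squares of all its elements. -/
/-!
Every subgroup of index 2 contains all squares, so it suffices to show that the subgroup `N`
generated by the squares has index 2. Every element of `SL(2,ℤ) ⧸ N` squares to 1, and since
`SL(2,ℤ)` is generated by `S` and `T` with `T⁻¹ * S = (S * T) ^ 2`, the quotient is generated
by the class of `S`; hence it has order at most 2. The order is exactly 2 because `S ∉ N`: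
reducing modulo 2 and taking the sign of the induced permutation of `(ℤ/2)²` is a character
to `ℤˣ` that kills every square but sends `S` to `-1`.
-/

open MatrixGroups Matrix ModularGroup

section SquareSubgroup

variable (G : Type*) [Group G]

def squareSubgroup : Subgroup G :=
  Subgroup.closure {x : G | ∃ g : G, x = g ^ 2}

instance squareSubgroup_normal : (squareSubgroup G).Normal := by
  suffices h : {x : G | ∃ g : G, x = g ^ 2} = Group.conjugatesOfSet {x | ∃ g : G, x = g ^ 2} by
    rw [squareSubgroup, h]
    exact Subgroup.normalClosure_normal
  refine Group.subset_conjugatesOfSet.antisymm fun x hx => ?_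
  simp_rw [Group.mem_conjugatesOfSet_iff, isConj_iff] at hx
  obtain ⟨_, ⟨g, rfl⟩, c, rfl⟩ := hx
  exact ⟨c * g * c⁻¹, (conj_pow ..).symm⟩

variable {G}

lemma sq_mem_squareSubgroup (g : G) : g ^ 2 ∈ squareSubgroup G :=
  Subgroup.subset_closure ⟨g, rfl⟩

lemma squareSubgroup_le_of_index_eq_two {H : Subgroup G} (hH : H.index = 2) :
    squareSubgroup G ≤ H :=
  (Subgroup.closure_le H).2 <| by
    rintro _ ⟨g, rfl⟩
    exact Subgroup.sq_mem_of_index_two hH g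

lemma squareSubgroup_le_ker {M : Type*} [Group M] (χ : G →* M) (hM : ∀ m : M, m ^ 2 = 1) :
    squareSubgroup G ≤ χ.ker :=
  (Subgroup.closure_le _).2 <| by
    rintro _ ⟨g, rfl⟩
    rw [SetLike.mem_coe, MonoidHom.mem_ker, map_pow, hM]

lemma index_squareSubgroup_eq_two {X : Set G} (hX : Subgroup.closure X = ⊤) {a : G}
    (ha : a ∉ squareSubgroup G) (hXa : ∀ x ∈ X, x⁻¹ * a ∈ squareSubgroup G) :
    (squareSubgroup G).index = 2 := by
  set q : G ⧸ squareSubgroup G := (a : G ⧸ squareSubgroup G)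
  have sq_eq_one (y : G ⧸ squareSubgroup G) : y ^ 2 = 1 := by
    induction y using QuotientGroup.induction_on with
    | H g => exact (QuotientGroup.eq_one_iff _).2 (sq_mem_squareSubgroup g)
  have mem_zpowers (y : G ⧸ squareSubgroup G) : y ∈ Subgroup.zpowers q := by
    have hle : Subgroup.closure (QuotientGroup.mk' (squareSubgroup G) '' X) ≤
        Subgroup.zpowers q := by
      rw [Subgroup.closure_le]
      rintro _ ⟨x, hx, rfl⟩
      rw [QuotientGroup.mk'_apply, QuotientGroup.eq.2 (hXa x hx)]
      exact Subgroup.mem_zpowers q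
    rw [← MonoidHom.map_closure, hX, ← MonoidHom.range_eq_map, QuotientGroup.range_mk'] at hle
    exact hle trivial
  rw [Subgroup.index, ← orderOf_eq_card_of_forall_mem_zpowers mem_zpowers]
  exact orderOf_eq_prime (sq_eq_one q) (by rwa [Ne, QuotientGroup.eq_one_iff])

lemma eq_squareSubgroup_of_index_eq_two (hN : (squareSubgroup G).index = 2) {H : Subgroup G}
    (hH : H.index = 2) : H = squareSubgroup G := by
  have hle := squareSubgroup_le_of_index_eq_two hH
  have hrel := Subgroup.relIndex_mul_index hle
  rw [hH, hN, mul_eq_right₀ two_ne_zero, Subgroup.relIndex_eq_one] at hrel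
  exact le_antisymm hrel hle

end SquareSubgroup

namespace ModularGroup

lemma T_inv_mul_S : T⁻¹ * S = (S * T) ^ 2 := by
  decide

def signModTwo : SL(2, ℤ) →* ℤˣ :=
  Equiv.Perm.sign.comp <| (MulAction.toPermHom SL(2, ZMod 2) (Fin 2 → ZMod 2)).comp <|
    SpecialLinearGroup.map (Int.castRingHom (ZMod 2))

-- `S` reduces to the swap of the two basis vectors of `(ℤ/2)²`, a transposition.
lemma signModTwo_S : signModTwo S = -1 := by
  decide

lemma S_notMem_squareSubgroup : S ∉ squareSubgroup SL(2, ℤ) := fun hS => by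
  have h := squareSubgroup_le_ker signModTwo Int.units_sq hS
  rw [MonoidHom.mem_ker, signModTwo_S] at h
  exact absurd h (by decide)

end ModularGroup

/-- `SL(2,ℤ)` has a unique subgroup of index 2, namely the subgroup generated by
the squares of all its elements. -/
theorem unique_index_two_subgroup_SL2Z :
    (Subgroup.closure {x : SL(2, ℤ) | ∃ g : SL(2, ℤ), x = g ^ 2}).index = 2 ∧
    ∀ Γ : Subgroup SL(2, ℤ), Γ.index = 2 →
      Γ = Subgroup.closure {x : SL(2, ℤ) | ∃ g : SL(2, ℤ), x = g ^ 2} := by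
  have hindex : (squareSubgroup SL(2, ℤ)).index = 2 := by
    refine index_squareSubgroup_eq_two SpecialLinearGroup.SL2Z_generators
      S_notMem_squareSubgroup ?_
    rintro x (rfl | rfl)
    · rw [inv_mul_cancel]
      exact one_mem _
    · rw [T_inv_mul_S]
      exact sq_mem_squareSubgroup _
  exact ⟨hindex, fun Γ hΓ => eq_squareSubgroup_of_index_eq_two hindex hΓ⟩
end
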